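/- Let c>1 be non-integral, h ≥ 2H_0(c)+1, 0 < δ < (h−2H_0(c))/(2h(h−1)H_0(c)), and ω ≥ 1/h − δ. Fix ν with 0 < ν < (1/3)·min{1/c, 1/h − δ}, and for a large integer N set L := N^ν and 𝔐 := {α ∈ [0,1] : ‖α‖ ≤ L/N}, where ‖·‖ denotes distance to the nearest integer. Define U(α;x) := ∑_{n≤x} n^{ω−1} e(nα) and U^♯(α;x) := ∑_{x/h≤n≤x} n^{ω−1} e(nα). Then there is a constant C such that uniformly for α ∈ 𝔐 and all large N: |T(α;N) − (1/c)U(α;N)| ≤ C·N^{ω−2ν} and |T^♯(α;N) − (1/c)U^♯(α;N)| ≤ C·N^{ω−2ν}. -/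

import Mathlib

/-!
Put `a_j = 1_{N_(c)}(j) j^{ω-1/c} - j^{ω-1}/c`, so that `T - U/c = ∑ a_j e(jα)` over `1 ≤ j ≤ N`
and `T^♯ - U^♯/c` is the same sum over `N/h ≤ j ≤ N`. With `κ = ω - 3ν > 0` the partial sums of
`a_j` are `O(m^κ)`: if `y = m^{1/c} + O(1)` counts the `n ≥ 1` with `⌊n^c⌋ ≤ m`, then
`∑_{j≤m} a_j = ∑_{n≤y} (⌊n^c⌋^{ω-1/c} - n^{cω-1}) + (∑_{n≤y} n^{cω-1} - y^{cω}/(cω))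
  + (y^{cω} - m^ω)/(cω) - (∑_{j≤m} j^{ω-1} - m^ω/ω)/c`,
and the mean value theorem bounds each bracket. Partial summation against `e(jα) = e(α)^j`, with
`|1 - e(α)| ≤ 2π‖α‖ ≤ 2π N^{ν-1}` on the major arc, costs one more factor `N^ν`.
-/

open MeasureTheory Filter Finset Set

noncomputable section

/-- `e(α) = exp(2πiα)`. -/
def eR (α : ℝ) : ℂ := Complex.exp (2 * Real.pi * Complex.I * α)

/-- The Piatetski-Shapiro set `N_(c) = {⌊n^c⌋ : n ∈ ℕ, n ≥ 1}`. -/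
def NPS (c : ℝ) : Set ℕ := {m | ∃ n : ℕ, 1 ≤ n ∧ m = ⌊(n : ℝ) ^ c⌋₊}

/-- `H₀(c)` for non-integral real `c > 1`. -/
def H0c (c : ℝ) : ℝ :=
  if c < 2 then 2 else ((⌊2 * c⌋ : ℝ) + 1) * ((⌊2 * c⌋ : ℝ) + 2) / 2

/-- `H₀(k)` for a positive integer `k`. -/
def H0k (k : ℕ) : ℕ :=
  if k ≤ 4 then 2 ^ (k - 1) else k * (k - 1) / 2 + Nat.sqrt (2 * k + 2)

/-- `k`-th powers of positive integers. -/
def Npow (k : ℕ) : Set ℕ := {m | ∃ n : ℕ, 1 ≤ n ∧ m = n ^ k}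

/-- `k`-th powers of Piatetski-Shapiro numbers. -/
def NPSpow (c : ℝ) (k : ℕ) : Set ℕ := {m | ∃ n ∈ NPS c, m = n ^ k}

/-- `k`-th powers of primes. -/
def Ppow (k : ℕ) : Set ℕ := {m | ∃ p : ℕ, p.Prime ∧ m = p ^ k}

/-- `k`-th powers of Piatetski-Shapiro primes. -/
def PPSpow (c : ℝ) (k : ℕ) : Set ℕ := {m | ∃ p ∈ NPS c, p.Prime ∧ m = p ^ k}

/-- The representation function `r_{A,h}(n)`: the number of ordered `h`-tuples
from `A` summing to `n`. -/
def rep (A : Set ℕ) (h n : ℕ) : ℕ :=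
  Nat.card {x : Fin h → ℕ // (∀ i, x i ∈ A) ∧ ∑ i, x i = n}

open scoped Classical in
/-- The finite set of ordered `h`-tuples of elements of `A` summing to `N`. -/
def tuples (A : Set ℕ) (h N : ℕ) : Finset (Fin h → ℕ) :=
  (Fintype.piFinset fun _ : Fin h => Finset.range (N + 1)).filter
    (fun x => (∀ i, x i ∈ A) ∧ ∑ i, x i = N)

/-- Weighted exponential sum `∑_{1 ≤ n ≤ x, n ∈ A} w(n) e(nα)`. -/
def expSum (A : Set ℕ) (w : ℕ → ℝ) (α x : ℝ) : ℂ :=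
  ∑ n ∈ Finset.Icc 1 ⌊x⌋₊, ((Set.indicator A w n : ℝ) : ℂ) * eR (n * α)

/-- Weighted exponential sum `∑_{y ≤ n ≤ x, n ∈ A} w(n) e(nα)`. -/
def expSumI (A : Set ℕ) (w : ℕ → ℝ) (α y x : ℝ) : ℂ :=
  ∑ n ∈ Finset.Icc ⌈y⌉₊ ⌊x⌋₊, ((Set.indicator A w n : ℝ) : ℂ) * eR (n * α)

/-- Distance to the nearest integer. -/
def distInt (α : ℝ) : ℝ := |α - (round α : ℝ)|

/-- The major arc `𝔐 = {α ∈ [0,1] : ‖α‖ ≤ N^ν / N}`. -/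
def MajorArc (ν : ℝ) (N : ℕ) : Set ℝ :=
  {α ∈ Set.Icc (0:ℝ) 1 | distInt α ≤ (N : ℝ) ^ ν / N}

/-- The minor arc `𝔪 = [0,1] ∖ 𝔐`. -/
def MinorArc (ν : ℝ) (N : ℕ) : Set ℝ := Set.Icc (0:ℝ) 1 \ MajorArc ν N

/-- `T(α;x) = ∑_{n≤x} n^{ω-1/c} 1_{N_(c)}(n) e(nα)`. -/
def Tc (c ω : ℝ) (α x : ℝ) : ℂ := expSum (NPS c) (fun n => (n : ℝ) ^ (ω - 1 / c)) α x

/-- `T^♯(α;x) = ∑_{x/h≤n≤x} n^{ω-1/c} 1_{N_(c)}(n) e(nα)`. -/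
def TcSharp (c ω : ℝ) (h : ℕ) (α x : ℝ) : ℂ :=
  expSumI (NPS c) (fun n => (n : ℝ) ^ (ω - 1 / c)) α (x / h) x

/-- `U(α;x) = ∑_{n≤x} n^{ω-1} e(nα)`. -/
def Uc (ω : ℝ) (α x : ℝ) : ℂ :=
  ∑ n ∈ Finset.Icc 1 ⌊x⌋₊, (((n : ℝ) ^ (ω - 1) : ℝ) : ℂ) * eR (n * α)

/-- `U^♯(α;x) = ∑_{x/h≤n≤x} n^{ω-1} e(nα)`. -/
def UcSharp (ω : ℝ) (h : ℕ) (α x : ℝ) : ℂ :=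
  ∑ n ∈ Finset.Icc ⌈x / h⌉₊ ⌊x⌋₊, (((n : ℝ) ^ (ω - 1) : ℝ) : ℂ) * eR (n * α)

/-- The complete Gauss-type sum `S(a,q) = ∑_{r=1}^q e(a r^k / q)`. -/
def Swar (k a q : ℕ) : ℂ := ∑ r ∈ Finset.Icc 1 q, eR (((a * r ^ k : ℕ) : ℝ) / q)

/-- The singular series of Waring's problem. -/
def SingSer (k h n : ℕ) : ℝ :=
  (∑' q : ℕ, ∑ a ∈ (Finset.Icc 1 q).filter (fun a => Nat.gcd a q = 1),
      (Swar k a q / (q : ℂ)) ^ h * eR (-(((n * a : ℕ) : ℝ) / q))).re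

/-- The restricted Gauss-type sum `S*(q,a) = ∑_{1≤r≤q, (r,q)=1} e(a r^k / q)`. -/
def SwarStar (k a q : ℕ) : ℂ :=
  ∑ r ∈ (Finset.Icc 1 q).filter (fun r => Nat.gcd r q = 1), eR (((a * r ^ k : ℕ) : ℝ) / q)

/-- The singular series of the Waring–Goldbach problem. -/
def SingSerStar (k h n : ℕ) : ℝ :=
  (∑' q : ℕ, ∑ a ∈ (Finset.Icc 1 q).filter (fun a => Nat.gcd a q = 1),
      (SwarStar k a q / (Nat.totient q : ℂ)) ^ h * eR (-(((n * a : ℕ) : ℝ) / q))).re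

/-- `K(k) = ∏_{(p-1) ∣ k} p^{ν(k,p)}`. -/
def Kk (k : ℕ) : ℕ :=
  ∏ p ∈ (Finset.range (k + 2)).filter (fun p => p.Prime ∧ (p - 1) ∣ k),
    p ^ (k.factorization p + if p = 2 ∧ 2 ∣ k then 2 else 1)

/-- A measurable positive function is regularly varying if `F(λx)/F(x)` converges
to a positive limit for every `λ > 0`. -/
def RegularlyVarying (F : ℝ → ℝ) : Prop :=
  Measurable F ∧ ∀ l : ℝ, 0 < l → ∃ L : ℝ, 0 < L ∧
    Filter.Tendsto (fun x => F (l * x) / F x) Filter.atTop (nhds L)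

/-- Hypothesis (PSW). -/
def PSW (c : ℝ) (k : ℕ) (P : ℝ) : Prop :=
  ∃ C : ℝ, ∀ α ∈ Set.Ico (0:ℝ) 1, ∀ x : ℝ, 2 ≤ x →
    ‖(expSum (NPSpow c k) (fun _ => 1) α x
      - (1 / c) * expSum (Npow k) (fun n => (n : ℝ) ^ ((1 / c - 1) / k)) α x)‖
      ≤ C * x ^ (1 / (c * k) - P)

/-- Hypothesis (PSWG). -/
def PSWG (c : ℝ) (k : ℕ) (P : ℝ) : Prop :=
  ∃ C : ℝ, ∀ α ∈ Set.Ico (0:ℝ) 1, ∀ x : ℝ, 2 ≤ x →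
    ‖(expSum (PPSpow c k) (fun n => Real.log n) α x
      - (1 / c) * expSum (Ppow k) (fun n => (n : ℝ) ^ ((1 / c - 1) / k) * Real.log n) α x)‖
      ≤ C * x ^ (1 / (c * k) - P)

open Asymptotics Real

lemma rpow_le_two_rpow_abs_mul {u t : ℝ} (p : ℝ) (hu : 0 < u) (h1 : u / 2 ≤ t) (h2 : t ≤ 2 * u) :
    t ^ p ≤ 2 ^ |p| * u ^ p := by
  have ht : 0 < t := by linarith
  rcases le_or_gt 0 p with hp | hp
  · calc t ^ p ≤ (2 * u) ^ p := Real.rpow_le_rpow ht.le h2 hp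
      _ = 2 ^ |p| * u ^ p := by rw [abs_of_nonneg hp, Real.mul_rpow zero_le_two hu.le]
  · calc t ^ p ≤ (u / 2) ^ p := Real.rpow_le_rpow_of_nonpos (by positivity) h1 hp.le
      _ = 2 ^ |p| * u ^ p := by
        rw [abs_of_neg hp, Real.div_rpow hu.le zero_le_two, Real.rpow_neg zero_le_two,
          div_eq_inv_mul]

lemma abs_rpow_sub_rpow_le {u t : ℝ} (s : ℝ) (hu : 0 < u) (h1 : u / 2 ≤ t) (h2 : t ≤ 2 * u) :
    |t ^ s - u ^ s| ≤ |s| * 2 ^ |s - 1| * u ^ (s - 1) * |t - u| := by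
  have hderiv : ∀ x ∈ Icc (u / 2) (2 * u),
      HasDerivWithinAt (fun x => x ^ s) (s * x ^ (s - 1)) (Icc (u / 2) (2 * u)) x :=
    fun x hx => (Real.hasDerivAt_rpow_const (Or.inl (by linarith [hx.1]))).hasDerivWithinAt
  have hbound : ∀ x ∈ Icc (u / 2) (2 * u), ‖s * x ^ (s - 1)‖ ≤ |s| * 2 ^ |s - 1| * u ^ (s - 1) := by
    intro x hx
    rw [Real.norm_eq_abs, abs_mul, abs_of_nonneg (Real.rpow_nonneg (by linarith [hx.1]) _),
      mul_assoc]
    gcongr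
    exact rpow_le_two_rpow_abs_mul _ hu hx.1 hx.2
  simpa using (convex_Icc _ _).norm_image_sub_le_of_norm_hasDerivWithin_le hderiv hbound
    ⟨by linarith, by linarith⟩ ⟨h1, h2⟩

lemma abs_floor_rpow_sub_rpow_le {t : ℝ} (p : ℝ) (ht : 1 ≤ t) :
    |(⌊t⌋₊ : ℝ) ^ p - t ^ p| ≤ |p| * 2 ^ |p - 1| * t ^ (p - 1) := by
  have hfloor : (1 : ℝ) ≤ ⌊t⌋₊ := by exact_mod_cast (Nat.one_le_floor_iff t).mpr ht
  have hlt := Nat.lt_floor_add_one t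
  have hle := Nat.floor_le (zero_le_one.trans ht)
  calc |(⌊t⌋₊ : ℝ) ^ p - t ^ p|
      ≤ |p| * 2 ^ |p - 1| * t ^ (p - 1) * |(⌊t⌋₊ : ℝ) - t| :=
        abs_rpow_sub_rpow_le p (by linarith) (by linarith) (by linarith)
    _ ≤ |p| * 2 ^ |p - 1| * t ^ (p - 1) * 1 := by
        gcongr
        rw [abs_le]
        constructor <;> linarith
    _ = |p| * 2 ^ |p - 1| * t ^ (p - 1) := mul_one _

lemma abs_rpow_sub_rpow_sub_one_sub_le {x : ℝ} (s : ℝ) (hx : 2 ≤ x) :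
    |x ^ s - (x - 1) ^ s - s * x ^ (s - 1)| ≤ |s| * (|s - 1| * 2 ^ |s - 2| * x ^ (s - 2)) := by
  set D := Icc (x - 1) x
  have hderiv : ∀ t ∈ D, HasDerivWithinAt (fun t => t ^ s - s * x ^ (s - 1) * t)
      (s * t ^ (s - 1) - s * x ^ (s - 1)) D t := by
    intro t ht
    have := (Real.hasDerivAt_rpow_const (p := s) (Or.inl (by linarith [ht.1]))).fun_sub
      ((hasDerivAt_id' t).const_mul (s * x ^ (s - 1)))
    simpa only [mul_one] using this.hasDerivWithinAt
  have hbound : ∀ t ∈ D, ‖s * t ^ (s - 1) - s * x ^ (s - 1)‖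
      ≤ |s| * (|s - 1| * 2 ^ |s - 2| * x ^ (s - 2)) := by
    intro t ht
    rw [Real.norm_eq_abs, ← mul_sub, abs_mul]
    gcongr
    have key := abs_rpow_sub_rpow_le (s - 1) (by linarith : 0 < x) (t := t)
      (by linarith [ht.1]) (by linarith [ht.2])
    rw [show s - 1 - 1 = s - 2 by ring] at key
    refine key.trans (le_of_le_of_eq (mul_le_of_le_one_right (by positivity) ?_) rfl)
    rw [abs_le]
    constructor <;> linarith [ht.1, ht.2]
  have := (convex_Icc _ _).norm_image_sub_le_of_norm_hasDerivWithin_le hderiv hbound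
    (⟨by linarith, by linarith⟩ : x - 1 ∈ D) (⟨by linarith, le_rfl⟩ : x ∈ D)
  rw [Real.norm_eq_abs, Real.norm_eq_abs, sub_sub_cancel, abs_one, mul_one] at this
  convert this using 2
  ring

lemma min_one_mul_rpow_sub_one_le_rpow_sub_rpow {σ x : ℝ} (hσ : 0 ≤ σ) (hx : 1 ≤ x) :
    min 1 σ * x ^ (σ - 1) ≤ x ^ σ - (x - 1) ^ σ := by
  have hx0 : 0 < x := by linarith
  have hbase : 0 ≤ 1 + -x⁻¹ := by
    have := inv_le_one_of_one_le₀ hx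
    linarith
  have hbern : (1 + -x⁻¹) ^ σ ≤ 1 - min 1 σ * x⁻¹ := by
    rcases le_total σ 1 with hσ1 | hσ1
    · rw [min_eq_right hσ1]
      linarith [rpow_one_add_le_one_add_mul_self (by linarith : -1 ≤ -x⁻¹) hσ hσ1]
    · rw [min_eq_left hσ1]
      calc (1 + -x⁻¹) ^ σ ≤ (1 + -x⁻¹) ^ (1 : ℝ) :=
            Real.rpow_le_rpow_of_exponent_ge' hbase (by linarith [inv_pos.mpr hx0]) zero_le_one hσ1
        _ = 1 - 1 * x⁻¹ := by rw [Real.rpow_one]; ring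
  have hsplit : (x - 1) ^ σ = x ^ σ * (1 + -x⁻¹) ^ σ := by
    rw [← Real.mul_rpow hx0.le hbase]
    congr 1
    field_simp
    ring
  rw [hsplit, Real.rpow_sub_one hx0.ne']
  have := mul_le_mul_of_nonneg_left hbern (Real.rpow_nonneg hx0.le σ)
  linarith [show x ^ σ * (1 - min 1 σ * x⁻¹) = x ^ σ - min 1 σ * (x ^ σ / x) by ring]

lemma sum_Icc_one_sub_pred {M : Type*} [AddCommGroup M] (f : ℕ → M) (y : ℕ) :
    ∑ n ∈ Finset.Icc 1 y, (f n - f (n - 1)) = f y - f 0 := by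
  induction y with
  | zero => simp
  | succ y ih => rw [Finset.sum_Icc_succ_top (by omega), ih, Nat.add_sub_cancel]; abel

lemma sum_Icc_rpow_sub_one_le {σ : ℝ} (hσ : 0 < σ) (y : ℕ) :
    ∑ n ∈ Finset.Icc 1 y, (n : ℝ) ^ (σ - 1) ≤ (y : ℝ) ^ σ / min 1 σ := by
  have hmin : 0 < min 1 σ := lt_min one_pos hσ
  calc ∑ n ∈ Finset.Icc 1 y, (n : ℝ) ^ (σ - 1)
      ≤ ∑ n ∈ Finset.Icc 1 y, (((n : ℝ) ^ σ - ((n - 1 : ℕ) : ℝ) ^ σ) / min 1 σ) := by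
        refine Finset.sum_le_sum fun n hn => ?_
        have hn1 : (1 : ℝ) ≤ n := by exact_mod_cast (Finset.mem_Icc.mp hn).1
        rw [le_div_iff₀ hmin, Nat.cast_sub (Finset.mem_Icc.mp hn).1, Nat.cast_one, mul_comm]
        exact min_one_mul_rpow_sub_one_le_rpow_sub_rpow hσ.le hn1
    _ = (y : ℝ) ^ σ / min 1 σ := by
        rw [← Finset.sum_div, sum_Icc_one_sub_pred (fun n : ℕ => (n : ℝ) ^ σ), Nat.cast_zero,
          Real.zero_rpow hσ.ne', sub_zero]

lemma isBigO_sum_Icc_of_isBigO_rpow {f : ℕ → ℝ} {σ : ℝ} (hσ : 0 < σ)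
    (hf : f =O[atTop] fun n => (n : ℝ) ^ (σ - 1)) :
    (fun y => ∑ n ∈ Finset.Icc 1 y, f n) =O[atTop] fun y => (y : ℝ) ^ σ := by
  obtain ⟨C, hC, hfC⟩ := bound_of_isBigO_nat_atTop hf
  refine IsBigO.of_bound (C / min 1 σ) (Eventually.of_forall fun y => ?_)
  have hterm : ∀ n ∈ Finset.Icc 1 y, ‖f n‖ ≤ C * (n : ℝ) ^ (σ - 1) := by
    intro n hn
    have hn0 : (0 : ℝ) < n := by exact_mod_cast (Finset.mem_Icc.mp hn).1
    simpa [abs_of_pos (Real.rpow_pos_of_pos hn0 _)] using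
      hfC (Real.rpow_pos_of_pos hn0 (σ - 1)).ne'
  calc ‖∑ n ∈ Finset.Icc 1 y, f n‖ ≤ ∑ n ∈ Finset.Icc 1 y, C * (n : ℝ) ^ (σ - 1) :=
        (norm_sum_le _ _).trans (Finset.sum_le_sum hterm)
    _ ≤ C * ((y : ℝ) ^ σ / min 1 σ) := by
        rw [← Finset.mul_sum]
        exact mul_le_mul_of_nonneg_left (sum_Icc_rpow_sub_one_le hσ y) hC.le
    _ = C / min 1 σ * ‖(y : ℝ) ^ σ‖ := by
        rw [Real.norm_of_nonneg (by positivity)]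
        ring

lemma isBigO_sum_Icc_rpow_sub_one_sub {s q : ℝ} (hs : 0 < s) (hq : 0 < q) (hsq : s - 1 ≤ q) :
    (fun y : ℕ => ∑ n ∈ Finset.Icc 1 y, (n : ℝ) ^ (s - 1) - (y : ℝ) ^ s / s)
      =O[atTop] fun y => (y : ℝ) ^ q := by
  have htel : ∀ y : ℕ, ∑ n ∈ Finset.Icc 1 y, (n : ℝ) ^ (s - 1) - (y : ℝ) ^ s / s
      = ∑ n ∈ Finset.Icc 1 y, ((n : ℝ) ^ (s - 1) - ((n : ℝ) ^ s - ((n - 1 : ℕ) : ℝ) ^ s) / s) := by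
    intro y
    rw [Finset.sum_sub_distrib, ← Finset.sum_div, sum_Icc_one_sub_pred (fun n : ℕ => (n : ℝ) ^ s),
      Nat.cast_zero, Real.zero_rpow hs.ne', sub_zero]
  refine (isBigO_sum_Icc_of_isBigO_rpow hq ?_).congr_left fun y => (htel y).symm
  refine IsBigO.of_bound (|s| * |s - 1| * 2 ^ |s - 2| / s) ?_
  filter_upwards [eventually_ge_atTop 2] with n hn
  have hn2 : (2 : ℝ) ≤ n := by exact_mod_cast hn
  have key := abs_rpow_sub_rpow_sub_one_sub_le s hn2
  rw [Real.norm_eq_abs, Real.norm_of_nonneg (by positivity), Nat.cast_sub (by omega), Nat.cast_one]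
  calc |(n : ℝ) ^ (s - 1) - ((n : ℝ) ^ s - ((n : ℝ) - 1) ^ s) / s|
      = |(n : ℝ) ^ s - ((n : ℝ) - 1) ^ s - s * (n : ℝ) ^ (s - 1)| / s := by
        rw [show (n : ℝ) ^ (s - 1) - ((n : ℝ) ^ s - ((n : ℝ) - 1) ^ s) / s
            = -((n : ℝ) ^ s - ((n : ℝ) - 1) ^ s - s * (n : ℝ) ^ (s - 1)) / s by field_simp; ring,
          abs_div, abs_neg, abs_of_pos hs]
    _ ≤ |s| * (|s - 1| * 2 ^ |s - 2| * (n : ℝ) ^ (s - 2)) / s := by gcongr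
    _ ≤ |s| * (|s - 1| * 2 ^ |s - 2| * (n : ℝ) ^ (q - 1)) / s := by
        gcongr |s| * (_ * ?_) / s
        exact Real.rpow_le_rpow_of_exponent_le (by linarith) (by linarith)
    _ = |s| * |s - 1| * 2 ^ |s - 2| / s * (n : ℝ) ^ (q - 1) := by ring

section PiatetskiShapiro

variable {c : ℝ}

lemma strictMono_floor_rpow (hc : 1 ≤ c) : StrictMono fun n : ℕ => ⌊(n : ℝ) ^ c⌋₊ := by
  refine strictMono_nat_of_lt_succ fun n => ?_
  have h1 : (1 : ℝ) ≤ (n : ℝ) + 1 := by linarith [n.cast_nonneg (α := ℝ)]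
  have hstep : (n : ℝ) ^ c + 1 ≤ ((n + 1 : ℕ) : ℝ) ^ c := by
    have key := min_one_mul_rpow_sub_one_le_rpow_sub_rpow (zero_le_one.trans hc) h1
    rw [min_eq_left hc, one_mul, add_sub_cancel_right] at key
    push_cast
    linarith [Real.one_le_rpow h1 (sub_nonneg.mpr hc)]
  calc ⌊(n : ℝ) ^ c⌋₊ < ⌊(n : ℝ) ^ c⌋₊ + 1 := Nat.lt_succ_self _
    _ = ⌊(n : ℝ) ^ c + 1⌋₊ := (Nat.floor_add_one (by positivity)).symm
    _ ≤ ⌊((n + 1 : ℕ) : ℝ) ^ c⌋₊ := Nat.floor_le_floor hstep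

def psCount (c : ℝ) (m : ℕ) : ℕ := ⌈((m : ℝ) + 1) ^ c⁻¹⌉₊ - 1

lemma floor_rpow_le_iff_le_psCount (hc : 0 < c) (n m : ℕ) :
    ⌊(n : ℝ) ^ c⌋₊ ≤ m ↔ n ≤ psCount c m := by
  have hceil : 0 < ⌈((m : ℝ) + 1) ^ c⁻¹⌉₊ := Nat.ceil_pos.mpr (by positivity)
  rw [← Nat.lt_add_one_iff, Nat.floor_lt (by positivity), Nat.cast_add_one,
    ← Real.lt_rpow_inv_iff_of_pos n.cast_nonneg (by positivity) hc, ← Nat.lt_ceil, psCount]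
  omega

lemma one_le_psCount (hc : 0 < c) {m : ℕ} (hm : 1 ≤ m) : 1 ≤ psCount c m := by
  rw [← floor_rpow_le_iff_le_psCount hc]
  simpa using hm

lemma abs_psCount_sub_rpow_le (hc : 1 ≤ c) (m : ℕ) :
    |(psCount c m : ℝ) - (m : ℝ) ^ c⁻¹| ≤ 1 := by
  set z := ((m : ℝ) + 1) ^ c⁻¹
  have hz : 0 < z := by positivity
  have hcast : (psCount c m : ℝ) = ⌈z⌉₊ - 1 := by
    rw [psCount, Nat.cast_sub (Nat.ceil_pos.mpr hz), Nat.cast_one]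
  have hz_le : z ≤ (m : ℝ) ^ c⁻¹ + 1 := by
    simpa using Real.rpow_add_le_add_rpow m.cast_nonneg zero_le_one (by positivity)
      (inv_le_one_of_one_le₀ hc)
  have hz_ge : (m : ℝ) ^ c⁻¹ ≤ z := Real.rpow_le_rpow (by positivity) (by linarith) (by positivity)
  rw [abs_le, hcast]
  constructor <;> linarith [Nat.le_ceil z, Nat.ceil_lt_add_one hz.le]

lemma tendsto_psCount_atTop (hc : 1 ≤ c) : Tendsto (psCount c) atTop atTop := by
  rw [← tendsto_natCast_atTop_iff (R := ℝ)]
  have h := (tendsto_rpow_atTop (inv_pos.mpr (by linarith : 0 < c))).comp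
    (tendsto_natCast_atTop_atTop (R := ℝ))
  refine tendsto_atTop_mono (fun m => ?_) (tendsto_atTop_add_const_right _ (-1) h)
  have := (abs_le.mp (abs_psCount_sub_rpow_le hc m)).1
  simp only [Function.comp_apply]
  linarith

lemma sum_Icc_indicator_NPS (hc : 1 ≤ c) (f : ℕ → ℝ) (m : ℕ) :
    ∑ j ∈ Finset.Icc 1 m, (NPS c).indicator f j
      = ∑ n ∈ Finset.Icc 1 (psCount c m), f ⌊(n : ℝ) ^ c⌋₊ := by
  classical
  have hc0 : 0 < c := by linarith
  have himage : (Finset.Icc 1 m).filter (· ∈ NPS c)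
      = (Finset.Icc 1 (psCount c m)).image fun n : ℕ => ⌊(n : ℝ) ^ c⌋₊ := by
    ext j
    simp only [Finset.mem_filter, Finset.mem_image, Finset.mem_Icc]
    constructor
    · rintro ⟨⟨-, hjm⟩, n, hn, rfl⟩
      exact ⟨n, ⟨hn, (floor_rpow_le_iff_le_psCount hc0 n m).mp hjm⟩, rfl⟩
    · rintro ⟨n, ⟨hn, hny⟩, rfl⟩
      refine ⟨⟨?_, (floor_rpow_le_iff_le_psCount hc0 n m).mpr hny⟩, ⟨n, hn, rfl⟩⟩
      exact (Nat.one_le_floor_iff _).mpr (Real.one_le_rpow (by exact_mod_cast hn) hc0.le)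
  simp_rw [Set.indicator_apply]
  rw [← Finset.sum_filter, himage,
    Finset.sum_image (strictMono_floor_rpow hc).injective.injOn]

lemma isBigO_floor_rpow_sub_rpow (hc : 0 < c) {ω κ : ℝ} (hωκ : ω - 1 ≤ κ) :
    (fun n : ℕ => (⌊(n : ℝ) ^ c⌋₊ : ℝ) ^ (ω - 1 / c) - (n : ℝ) ^ (c * ω - 1))
      =O[atTop] fun n => (n : ℝ) ^ (c * κ - 1) := by
  refine IsBigO.of_bound (|ω - 1 / c| * 2 ^ |ω - 1 / c - 1|) ?_
  filter_upwards [eventually_ge_atTop 1] with n hn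
  have hn1 : (1 : ℝ) ≤ n := by exact_mod_cast hn
  have hpow : ∀ e : ℝ, ((n : ℝ) ^ c) ^ e = (n : ℝ) ^ (c * e) := fun e =>
    (Real.rpow_mul n.cast_nonneg c e).symm
  have key := abs_floor_rpow_sub_rpow_le (ω - 1 / c) (Real.one_le_rpow hn1 hc.le)
  rw [hpow, hpow, show c * (ω - 1 / c) = c * ω - 1 by field_simp] at key
  rw [Real.norm_eq_abs, Real.norm_of_nonneg (by positivity)]
  refine key.trans (mul_le_mul_of_nonneg_left
    (Real.rpow_le_rpow_of_exponent_le hn1 ?_) (by positivity))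
  rw [show c * (ω - 1 / c - 1) = c * (ω - 1) - 1 by field_simp; ring]
  linarith [mul_le_mul_of_nonneg_left hωκ hc.le]

lemma isBigO_psCount_rpow (hc : 1 ≤ c) {σ : ℝ} (hσ : 0 ≤ σ) :
    (fun m => (psCount c m : ℝ) ^ (c * σ)) =O[atTop] fun m => (m : ℝ) ^ σ := by
  have hc0 : 0 < c := by linarith
  refine IsBigO.of_bound (2 ^ (c * σ)) ?_
  filter_upwards [eventually_ge_atTop 1] with m hm
  have hx : 1 ≤ (m : ℝ) ^ c⁻¹ := Real.one_le_rpow (by exact_mod_cast hm) (by positivity)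
  have hy := (abs_le.mp (abs_psCount_sub_rpow_le hc m)).2
  rw [Real.norm_of_nonneg (by positivity), Real.norm_of_nonneg (by positivity)]
  calc (psCount c m : ℝ) ^ (c * σ) ≤ (2 * (m : ℝ) ^ c⁻¹) ^ (c * σ) :=
        Real.rpow_le_rpow (by positivity) (by linarith) (by positivity)
    _ = 2 ^ (c * σ) * (m : ℝ) ^ σ := by
        rw [Real.mul_rpow zero_le_two (by positivity), ← Real.rpow_mul m.cast_nonneg,
          inv_mul_cancel_left₀ hc0.ne']

lemma isBigO_psCount_rpow_sub (hc : 1 ≤ c) {ω κ : ℝ} (hωκ : ω - 1 / c ≤ κ) :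
    (fun m => (psCount c m : ℝ) ^ (c * ω) - (m : ℝ) ^ ω) =O[atTop] fun m => (m : ℝ) ^ κ := by
  have hc0 : 0 < c := by linarith
  refine IsBigO.of_bound (|c * ω| * 2 ^ |c * ω - 1|) ?_
  filter_upwards [eventually_ge_atTop 1] with m hm
  have hm1 : (1 : ℝ) ≤ m := by exact_mod_cast hm
  set x := (m : ℝ) ^ c⁻¹
  have hx : 1 ≤ x := Real.one_le_rpow hm1 (by positivity)
  have hpow : ∀ e : ℝ, x ^ (c * e) = (m : ℝ) ^ e := fun e => by
    rw [← Real.rpow_mul m.cast_nonneg, inv_mul_cancel_left₀ hc0.ne']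
  have hy := abs_le.mp (abs_psCount_sub_rpow_le hc m)
  have hy1 : (1 : ℝ) ≤ psCount c m := by exact_mod_cast one_le_psCount hc0 hm
  have key := abs_rpow_sub_rpow_le (c * ω) (by linarith : 0 < x) (t := psCount c m)
    (by rcases le_total x 2 with h | h <;> linarith) (by linarith)
  have hpow' : x ^ (c * ω - 1) = (m : ℝ) ^ (ω - 1 / c) := by
    rw [← hpow]
    congr 1
    field_simp
  rw [hpow, hpow'] at key
  rw [Real.norm_eq_abs, Real.norm_of_nonneg (by positivity)]
  calc |(psCount c m : ℝ) ^ (c * ω) - (m : ℝ) ^ ω|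
      ≤ |c * ω| * 2 ^ |c * ω - 1| * (m : ℝ) ^ (ω - 1 / c) * 1 :=
        key.trans (by gcongr; exact abs_le.mpr ⟨by linarith, by linarith⟩)
    _ ≤ |c * ω| * 2 ^ |c * ω - 1| * (m : ℝ) ^ κ := by
        rw [mul_one]
        gcongr

def psDiscrepancy (c ω : ℝ) (j : ℕ) : ℝ :=
  (NPS c).indicator (fun n => (n : ℝ) ^ (ω - 1 / c)) j - 1 / c * (j : ℝ) ^ (ω - 1)

theorem isBigO_sum_psDiscrepancy (hc : 1 ≤ c) {ω κ : ℝ} (hω : 0 < ω) (hκ : 0 < κ)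
    (hωκ : ω - 1 / c ≤ κ) :
    (fun m => ∑ j ∈ Finset.Icc 1 m, psDiscrepancy c ω j) =O[atTop] fun m => (m : ℝ) ^ κ := by
  have hc0 : 0 < c := by linarith
  have hωκ' : ω - 1 ≤ κ := by
    have : 1 / c ≤ 1 := by rw [div_le_one hc0]; exact hc
    linarith
  have hcωκ : c * ω - 1 ≤ c * κ := by
    have := mul_le_mul_of_nonneg_left hωκ hc0.le
    rwa [mul_sub, mul_one_div_cancel hc0.ne'] at this
  have hy := tendsto_psCount_atTop hc
  have hpow := isBigO_psCount_rpow hc hκ.le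
  have hfloor := ((isBigO_sum_Icc_of_isBigO_rpow (by positivity)
    (isBigO_floor_rpow_sub_rpow hc0 hωκ')).comp_tendsto hy).trans hpow
  have hpowerSum := ((isBigO_sum_Icc_rpow_sub_one_sub (by positivity) (by positivity)
    hcωκ).comp_tendsto hy).trans hpow
  have hcount := isBigO_psCount_rpow_sub hc hωκ
  have hsum := isBigO_sum_Icc_rpow_sub_one_sub hω hκ hωκ'
  refine ((((hfloor.add hpowerSum).add (hcount.const_mul_left (c * ω)⁻¹)).sub
    (hsum.const_mul_left c⁻¹))).congr_left fun m => ?_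
  simp only [Function.comp_apply, psDiscrepancy, Finset.sum_sub_distrib, ← Finset.mul_sum,
    sum_Icc_indicator_NPS hc]
  field_simp
  ring

lemma exists_pos_abs_sum_psDiscrepancy_le (hc : 1 ≤ c) {ω κ : ℝ} (hω : 0 < ω) (hκ : 0 < κ)
    (hωκ : ω - 1 / c ≤ κ) :
    ∃ C > 0, ∀ m N : ℕ, m ≤ N →
      |∑ j ∈ Finset.Icc 1 m, psDiscrepancy c ω j| ≤ C * (N : ℝ) ^ κ := by
  have hzero (m : ℕ) (hm : (m : ℝ) ^ κ = 0) : ∑ j ∈ Finset.Icc 1 m, psDiscrepancy c ω j = 0 := by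
    rw [Real.rpow_eq_zero m.cast_nonneg hκ.ne', Nat.cast_eq_zero] at hm
    simp [hm]
  obtain ⟨C, hC⟩ := (isBigO_nat_atTop_iff hzero).mp (isBigO_sum_psDiscrepancy hc hω hκ hωκ)
  refine ⟨|C| + 1, by positivity, fun m N hmN => (hC m).trans ?_⟩
  rw [Real.norm_of_nonneg (by positivity)]
  exact mul_le_mul (by linarith [le_abs_self C])
    (Real.rpow_le_rpow m.cast_nonneg (by exact_mod_cast hmN) hκ.le) (by positivity) (by positivity)

end PiatetskiShapiro

lemma eR_natCast_mul (n : ℕ) (α : ℝ) : eR (n * α) = eR α ^ n := by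
  rw [eR, eR, ← Complex.exp_nat_mul]
  congr 1
  push_cast
  ring

lemma norm_eR (θ : ℝ) : ‖eR θ‖ = 1 := by
  rw [eR, show 2 * (π : ℂ) * Complex.I * θ = ((2 * π * θ : ℝ) : ℂ) * Complex.I by
    push_cast; ring]
  exact Complex.norm_exp_ofReal_mul_I _

lemma norm_one_sub_eR_le (α : ℝ) : ‖1 - eR α‖ ≤ 2 * π * distInt α := by
  have hshift : 2 * (π : ℂ) * Complex.I * α
      = Complex.I * ((2 * π * (α - round α) : ℝ) : ℂ) + (round α : ℤ) * (2 * π * Complex.I) := by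
    push_cast
    ring
  rw [norm_sub_rev, eR, hshift, Complex.exp_add, Complex.exp_int_mul_two_pi_mul_I, mul_one]
  refine Real.norm_exp_I_mul_ofReal_sub_one_le.trans_eq ?_
  rw [Real.norm_eq_abs, abs_mul, abs_of_pos Real.two_pi_pos, distInt]

lemma sum_Icc_mul_pow_eq {R : Type*} [Ring R] (a : ℕ → R) (w : R) (M : ℕ) :
    ∑ j ∈ Finset.Icc 1 M, a j * w ^ j = (∑ j ∈ Finset.Icc 1 M, a j) * w ^ M
      + ∑ k ∈ Finset.range M, (∑ j ∈ Finset.Icc 1 k, a j) * (w ^ k - w ^ (k + 1)) := by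
  induction M with
  | zero => simp
  | succ M ih =>
    rw [Finset.sum_Icc_succ_top (by omega), ih, Finset.sum_range_succ,
      Finset.sum_Icc_succ_top (by omega)]
    noncomm_ring

lemma norm_sum_Icc_mul_pow_le {R : Type*} [NormedRing R] [NormOneClass R] (a : ℕ → R) {w : R}
    (hw : ‖w‖ ≤ 1) {K : ℝ} (M : ℕ) (hK : ∀ m ≤ M, ‖∑ j ∈ Finset.Icc 1 m, a j‖ ≤ K) :
    ‖∑ j ∈ Finset.Icc 1 M, a j * w ^ j‖ ≤ K * (1 + M * ‖1 - w‖) := by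
  have hK0 : 0 ≤ K := (norm_nonneg _).trans (hK 0 M.zero_le)
  have hpow : ∀ k, ‖w ^ k‖ ≤ 1 := fun k => (norm_pow_le w k).trans (pow_le_one₀ (norm_nonneg _) hw)
  have hterm : ∀ k ∈ Finset.range M,
      ‖(∑ j ∈ Finset.Icc 1 k, a j) * (w ^ k - w ^ (k + 1))‖ ≤ K * ‖1 - w‖ := by
    intro k hk
    rw [pow_succ, ← mul_one_sub]
    calc _ ≤ ‖∑ j ∈ Finset.Icc 1 k, a j‖ * (‖w ^ k‖ * ‖1 - w‖) :=
          (norm_mul_le _ _).trans (mul_le_mul_of_nonneg_left (norm_mul_le _ _) (norm_nonneg _))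
      _ ≤ K * (1 * ‖1 - w‖) := by
          gcongr
          exacts [hK k (Finset.mem_range.mp hk).le, hpow k]
      _ = K * ‖1 - w‖ := by rw [one_mul]
  rw [sum_Icc_mul_pow_eq]
  calc _ ≤ ‖(∑ j ∈ Finset.Icc 1 M, a j) * w ^ M‖
        + ∑ k ∈ Finset.range M, ‖(∑ j ∈ Finset.Icc 1 k, a j) * (w ^ k - w ^ (k + 1))‖ :=
        (norm_add_le _ _).trans (by gcongr; exact norm_sum_le _ _)
    _ ≤ K * 1 + ∑ k ∈ Finset.range M, K * ‖1 - w‖ := by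
        gcongr with k hk
        · exact (norm_mul_le _ _).trans (mul_le_mul (hK M le_rfl) (hpow M) (norm_nonneg _) hK0)
        · exact hterm k hk
    _ = K * (1 + M * ‖1 - w‖) := by
        rw [Finset.sum_const, Finset.card_range, nsmul_eq_mul]
        ring

lemma sum_Icc_eq_sum_Icc_one_sub {M : Type*} [AddCommGroup M] (f : ℕ → M) {lo hi : ℕ}
    (hlo : 1 ≤ lo) (hle : lo ≤ hi + 1) :
    ∑ j ∈ Finset.Icc lo hi, f j
      = ∑ j ∈ Finset.Icc 1 hi, f j - ∑ j ∈ Finset.Icc 1 (lo - 1), f j := by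
  obtain ⟨k, rfl⟩ := Nat.exists_eq_add_of_le' hlo
  have h := Finset.sum_Ioc_consecutive f (Nat.zero_le k) (show k ≤ hi by omega)
  simp only [← Finset.Icc_add_one_left_eq_Ioc, zero_add] at h
  rw [Nat.add_sub_cancel, ← h]
  abel

lemma norm_sum_Icc_mul_eR_le (a : ℕ → ℝ) (α : ℝ) {K : ℝ} (M : ℕ)
    (hK : ∀ m ≤ M, |∑ j ∈ Finset.Icc 1 m, a j| ≤ K) :
    ‖∑ j ∈ Finset.Icc 1 M, (a j : ℂ) * eR (j * α)‖ ≤ K * (1 + 2 * π * M * distInt α) := by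
  have hK0 : 0 ≤ K := (abs_nonneg _).trans (hK 0 M.zero_le)
  simp_rw [eR_natCast_mul]
  refine (norm_sum_Icc_mul_pow_le _ (norm_eR α).le (K := K) M fun m hm => ?_).trans ?_
  · rw [← Complex.ofReal_sum, Complex.norm_real]
    exact hK m hm
  · gcongr K * (1 + ?_)
    rw [mul_comm (2 * π), mul_assoc]
    gcongr
    exact norm_one_sub_eR_le α

lemma norm_sum_Icc_mul_eR_le_of_one_le (a : ℕ → ℝ) (α : ℝ) {K : ℝ} {lo M : ℕ} (hlo : 1 ≤ lo)
    (hK : ∀ m ≤ M, |∑ j ∈ Finset.Icc 1 m, a j| ≤ K) :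
    ‖∑ j ∈ Finset.Icc lo M, (a j : ℂ) * eR (j * α)‖
      ≤ 2 * (K * (1 + 2 * π * M * distInt α)) := by
  have hB := norm_sum_Icc_mul_eR_le a α M hK
  have hB0 : 0 ≤ K * (1 + 2 * π * M * distInt α) := (norm_nonneg _).trans hB
  rcases le_or_gt lo (M + 1) with hle | hlt
  · rw [sum_Icc_eq_sum_Icc_one_sub _ hlo hle]
    have hB' := norm_sum_Icc_mul_eR_le a α (lo - 1) fun m hm => hK m (by omega)
    have hK0 : 0 ≤ K := (abs_nonneg _).trans (hK 0 M.zero_le)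
    have hmono : K * (1 + 2 * π * (lo - 1 : ℕ) * distInt α)
        ≤ K * (1 + 2 * π * M * distInt α) := by
      gcongr
      · exact abs_nonneg (α - round α)
      · exact_mod_cast (show lo - 1 ≤ M by omega)
    linarith [norm_sub_le (∑ j ∈ Finset.Icc 1 M, (a j : ℂ) * eR (j * α))
      (∑ j ∈ Finset.Icc 1 (lo - 1), (a j : ℂ) * eR (j * α))]
  · rw [Finset.Icc_eq_empty (by omega), Finset.sum_empty, norm_zero]
    linarith

lemma Tc_sub_Uc_eq (c ω α x : ℝ) :
    Tc c ω α x - (1 / c) * Uc ω α x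
      = ∑ j ∈ Finset.Icc 1 ⌊x⌋₊, (psDiscrepancy c ω j : ℂ) * eR (j * α) := by
  rw [Tc, expSum, Uc, Finset.mul_sum, ← Finset.sum_sub_distrib]
  refine Finset.sum_congr rfl fun j _ => ?_
  simp only [psDiscrepancy]
  push_cast
  ring

lemma TcSharp_sub_UcSharp_eq (c ω : ℝ) (h : ℕ) (α x : ℝ) :
    TcSharp c ω h α x - (1 / c) * UcSharp ω h α x
      = ∑ j ∈ Finset.Icc ⌈x / h⌉₊ ⌊x⌋₊, (psDiscrepancy c ω j : ℂ) * eR (j * α) := by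
  rw [TcSharp, expSumI, UcSharp, Finset.mul_sum, ← Finset.sum_sub_distrib]
  refine Finset.sum_congr rfl fun j _ => ?_
  simp only [psDiscrepancy]
  push_cast
  ring

lemma norm_sum_Icc_mul_eR_le_of_mem_MajorArc (a : ℕ → ℝ) {C κ ν α : ℝ} {N lo : ℕ}
    (hC : 0 ≤ C) (ha : ∀ m ≤ N, |∑ j ∈ Finset.Icc 1 m, a j| ≤ C * (N : ℝ) ^ κ) (hν : 0 ≤ ν)
    (hN : 1 ≤ N) (hα : α ∈ MajorArc ν N) (hlo : 1 ≤ lo) :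
    ‖∑ j ∈ Finset.Icc lo N, (a j : ℂ) * eR (j * α)‖
      ≤ 2 * (C * (1 + 2 * π)) * (N : ℝ) ^ (κ + ν) := by
  have hN1 : (1 : ℝ) ≤ N := by exact_mod_cast hN
  have hNν : 1 ≤ (N : ℝ) ^ ν := Real.one_le_rpow hN1 hν
  have hdist : N * distInt α ≤ (N : ℝ) ^ ν := by
    have := mul_le_mul_of_nonneg_left hα.2 (by positivity : (0 : ℝ) ≤ N)
    rwa [mul_div_cancel₀ _ (by positivity)] at this
  calc _ ≤ 2 * (C * (N : ℝ) ^ κ * (1 + 2 * π * N * distInt α)) :=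
        norm_sum_Icc_mul_eR_le_of_one_le a α hlo ha
    _ ≤ 2 * (C * (N : ℝ) ^ κ * ((1 + 2 * π) * (N : ℝ) ^ ν)) := by
        gcongr
        nlinarith [Real.pi_pos]
    _ = 2 * (C * (1 + 2 * π)) * (N : ℝ) ^ (κ + ν) := by
        rw [Real.rpow_add (by positivity)]
        ring

theorem stmt5_general (c : ℝ) (hc1 : 1 < c)
    (h : ℕ)
    (δ : ℝ) (hδ0 : 0 < δ)
    (ω : ℝ) (hω : ω ≥ 1 / h - δ)
    (ν : ℝ) (hν0 : 0 < ν) (hν : ν < (1 / 3) * min (1 / c) (1 / h - δ)) :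
    ∃ C > (0:ℝ), ∀ᶠ N : ℕ in Filter.atTop, ∀ α ∈ MajorArc ν N,
      ‖(Tc c ω α (N : ℝ) - (1 / c) * Uc ω α (N : ℝ))‖
          ≤ C * (N : ℝ) ^ (ω - 2 * ν) ∧
      ‖(TcSharp c ω h α (N : ℝ) - (1 / c) * UcSharp ω h α (N : ℝ))‖
          ≤ C * (N : ℝ) ^ (ω - 2 * ν) := by
  have hν_c : 3 * ν < 1 / c := by linarith [min_le_left (1 / c) (1 / h - δ)]
  have hν_h : 3 * ν < 1 / h - δ := by linarith [min_le_right (1 / c) (1 / h - δ)]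
  have hh : 0 < (h : ℝ) := by
    rcases h.eq_zero_or_pos with rfl | hpos
    · simp only [CharP.cast_eq_zero, div_zero, zero_sub] at hν_h
      linarith
    · exact_mod_cast hpos
  obtain ⟨C, hC0, hC⟩ := exists_pos_abs_sum_psDiscrepancy_le hc1.le (ω := ω) (κ := ω - 3 * ν)
    (by linarith) (by linarith) (by linarith)
  refine ⟨2 * (C * (1 + 2 * π)), by positivity, ?_⟩
  filter_upwards [eventually_ge_atTop 1] with N hN α hα
  have key (lo : ℕ) (hlo : 1 ≤ lo) := norm_sum_Icc_mul_eR_le_of_mem_MajorArc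
    (psDiscrepancy c ω) hC0.le (fun m hm => hC m N hm) hν0.le hN hα hlo
  rw [show ω - 3 * ν + ν = ω - 2 * ν by ring] at key
  rw [Tc_sub_Uc_eq, TcSharp_sub_UcSharp_eq, Nat.floor_natCast]
  exact ⟨key 1 le_rfl, key _ (Nat.ceil_pos.mpr (by positivity))⟩

/-- Major arc approximation of `T` and `T^♯` by `U` and `U^♯`. -/
theorem stmt5 (c : ℝ) (hc1 : 1 < c) (hcni : ∀ m : ℤ, c ≠ (m : ℝ))
    (h : ℕ) (hh : (h : ℝ) ≥ 2 * H0c c + 1)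
    (δ : ℝ) (hδ0 : 0 < δ)
    (hδ : δ < ((h : ℝ) - 2 * H0c c) / (2 * h * (h - 1) * H0c c))
    (ω : ℝ) (hω : ω ≥ 1 / h - δ)
    (ν : ℝ) (hν0 : 0 < ν) (hν : ν < (1 / 3) * min (1 / c) (1 / h - δ)) :
    ∃ C > (0:ℝ), ∀ᶠ N : ℕ in Filter.atTop, ∀ α ∈ MajorArc ν N,
      ‖(Tc c ω α (N : ℝ) - (1 / c) * Uc ω α (N : ℝ))‖
          ≤ C * (N : ℝ) ^ (ω - 2 * ν) ∧
      ‖(TcSharp c ω h α (N : ℝ) - (1 / c) * UcSharp ω h α (N : ℝ))‖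
          ≤ C * (N : ℝ) ^ (ω - 2 * ν) :=
  stmt5_general c hc1 h δ hδ0 ω hω ν hν0 hν
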